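/- arXiv:1904.13070 — 2 statements merged into one kernel-verified Lean document; each statement's English description precedes it below -/
import Mathlib

section
/- Under the network assumptions, the entries of the transition matrices converge geometrically to 1/n: for all k ≥ s ≥ 0 and all indices i, j, |[Ψ(k,s)]_{ij} − 1/n| ≤ μ·β^{k−s}. -/
/-!
Every product of `K₀ ≥ κ` consecutive weight matrices has all entries at least `δ = η ^ K₀`: a walk
may wait at `i`, step from `i` to `j` at the time that the connectivity assumption provides, and
then wait at `j`. Such a stochastic block shrinks the range of the values in each column by the
factor `1 - δ` (Doeblin's argument), so column `j` of `Ψ(k,s)` lies in an interval of length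
`(1 - δ) ^ ⌊(k - s + 1) / K₀⌋`. Since the column sums to `1`, this interval contains `1 / n`, and
`(1 - δ) ^ ⌊(k - s + 1) / K₀⌋ ≤ β ^ (k - s) / (1 - δ) ≤ μ β ^ (k - s)`.
-/

/-- The transition matrix `Ψ(k,s) = W(k)·W(k−1)⋯W(s)` for `k ≥ s`. -/
def transitionMatrix {n : ℕ} (W : ℕ → Matrix (Fin n) (Fin n) ℝ) (k s : ℕ) :
    Matrix (Fin n) (Fin n) ℝ :=
  (((List.range (k - s + 1)).reverse).map fun t => W (s + t)).prod

open Finset Matrix Set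

/-- `W (s + m - 1) * ⋯ * W s`; unlike `transitionMatrix` it allows the empty product, so that it
splits as in `windowProd_add`. -/
def windowProd {M : Type*} [Monoid M] (W : ℕ → M) (s m : ℕ) : M :=
  ((List.range m).reverse.map fun t => W (s + t)).prod

section windowProd

variable {M : Type*} [Monoid M] (W : ℕ → M) (s : ℕ)

@[simp]
theorem windowProd_zero : windowProd W s 0 = 1 := rfl

theorem windowProd_succ (m : ℕ) : windowProd W s (m + 1) = W (s + m) * windowProd W s m := by
  simp [windowProd, List.range_succ]

theorem windowProd_add (m m' : ℕ) :
    windowProd W s (m + m') = windowProd W (s + m) m' * windowProd W s m := by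
  induction m' with
  | zero => simp
  | succ m' ih => rw [← add_assoc, windowProd_succ, ih, windowProd_succ, add_assoc, mul_assoc]

theorem windowProd_mem {S : Submonoid M} (hW : ∀ k, W k ∈ S) (m : ℕ) : windowProd W s m ∈ S :=
  S.list_prod_mem (by simp [hW])

end windowProd

namespace Matrix

variable {ι R : Type*} [Fintype ι]

theorem le_mul_apply_of_nonneg [Semiring R] [PartialOrder R] [IsOrderedRing R]
    {A B : Matrix ι ι R} (hA : ∀ i j, 0 ≤ A i j) (hB : ∀ i j, 0 ≤ B i j) (i l j : ι) :
    A i l * B l j ≤ (A * B) i j :=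
  single_le_sum (f := fun l => A i l * B l j) (fun l _ => mul_nonneg (hA i l) (hB l j))
    (mem_univ l)

variable [DecidableEq ι]

section OrderedSemiring

variable [Semiring R] [PartialOrder R] [IsOrderedRing R] {W : ℕ → Matrix ι ι R}

theorem windowProd_nonneg (hW : ∀ k i j, 0 ≤ W k i j) (s m : ℕ) (i j : ι) :
    0 ≤ windowProd W s m i j := by
  induction m generalizing i j with
  | zero => rw [windowProd_zero, one_apply]; split_ifs <;> simp
  | succ m ih => rw [windowProd_succ]; exact sum_nonneg fun l _ => mul_nonneg (hW _ _ _) (ih l j)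

variable {η : R} (hη : 0 ≤ η) (hW : ∀ k i j, 0 ≤ W k i j) (hdiag : ∀ k i, η ≤ W k i i)
include hη hW hdiag

theorem pow_le_windowProd_apply_self (s m : ℕ) (i : ι) : η ^ m ≤ windowProd W s m i i := by
  induction m with
  | zero => simp
  | succ m ih =>
    rw [windowProd_succ, pow_succ', mul_apply]
    calc η * η ^ m ≤ W (s + m) i i * windowProd W s m i i :=
          mul_le_mul (hdiag _ i) ih (pow_nonneg hη m) (hW _ _ _)
      _ ≤ ∑ l, W (s + m) i l * windowProd W s m l i := le_mul_apply_of_nonneg (hW _)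
          (windowProd_nonneg hW s m) i i i

theorem pow_le_windowProd_apply {s m t : ℕ} (ht : t < m) {i j : ι} (hij : η ≤ W (s + t) i j) :
    η ^ m ≤ windowProd W s m i j := by
  obtain ⟨r, rfl⟩ := Nat.exists_eq_add_of_lt ht
  have hsplit : windowProd W s (t + r + 1) =
      windowProd W (s + (t + 1)) r * (W (s + t) * windowProd W s t) := by
    rw [add_right_comm, windowProd_add, windowProd_succ]
  have hnonneg := windowProd_nonneg hW
  have hstep : ∀ i j, 0 ≤ (W (s + t) * windowProd W s t) i j := fun i j =>
    sum_nonneg fun l _ => mul_nonneg (hW _ _ _) (hnonneg s t l j)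
  have hself := pow_le_windowProd_apply_self hη hW hdiag
  calc η ^ (t + r + 1) = η ^ r * (η * η ^ t) := by
        rw [show t + r + 1 = r + (t + 1) by omega, pow_add, pow_succ']
    _ ≤ windowProd W (s + (t + 1)) r i i * (W (s + t) i j * windowProd W s t j j) :=
        mul_le_mul (hself _ _ i) (mul_le_mul hij (hself _ _ j) (pow_nonneg hη t) (hW _ _ _))
          (mul_nonneg hη (pow_nonneg hη t)) (hnonneg _ _ i i)
    _ ≤ windowProd W s (t + r + 1) i j := by
        rw [hsplit]
        exact (mul_le_mul_of_nonneg_left (le_mul_apply_of_nonneg (hW _) (hnonneg s t) i j j)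
          (hnonneg _ _ i i)).trans (le_mul_apply_of_nonneg (hnonneg _ r) hstep i i j)

theorem pow_le_windowProd_apply_of_connected {κ m : ℕ} (hκm : κ ≤ m)
    (hconn : ∀ k, ∀ i j : ι, ∃ s, k ≤ s ∧ s < k + κ ∧ η ≤ W s i j) (s : ℕ) (i j : ι) :
    η ^ m ≤ windowProd W s m i j := by
  obtain ⟨u, hsu, huκ, hu⟩ := hconn s i j
  obtain ⟨t, rfl⟩ := Nat.exists_eq_add_of_le hsu
  exact pow_le_windowProd_apply hη hW hdiag (by omega) hu

end OrderedSemiring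

section OrderedCommRing

variable [CommRing R] [LinearOrder R] [IsStrictOrderedRing R]

/-- The new interval is `[a + δ (v l₀ - a), a + D - δ (a + D - v l₀)]`. -/
theorem exists_mulVec_mem_Icc {P : Matrix ι ι R} (hP : P ∈ rowStochastic R ι) {δ : R} {l₀ : ι}
    (hδ : ∀ i, δ ≤ P i l₀) {v : ι → R} {a D : R} (hv : ∀ l, v l ∈ Icc a (a + D)) :
    ∃ a', ∀ i, (P *ᵥ v) i ∈ Icc a' (a' + (1 - δ) * D) := by
  have hlower : ∀ i (w : ι → R), (∀ l, 0 ≤ w l) → δ * w l₀ ≤ ∑ l, P i l * w l := fun i w hw =>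
    (mul_le_mul_of_nonneg_right (hδ i) (hw l₀)).trans <|
      single_le_sum (f := fun l => P i l * w l)
        (fun l _ => mul_nonneg (nonneg_of_mem_rowStochastic hP) (hw l)) (mem_univ l₀)
  have hsum : ∀ i c, ∑ l, P i l * (v l - c) = (P *ᵥ v) i - c := fun i c => by
    simp [mul_sub, sum_sub_distrib, ← sum_mul, sum_row_of_mem_rowStochastic hP, mulVec,
      dotProduct]
  refine ⟨a + δ * (v l₀ - a), fun i => ⟨?_, ?_⟩⟩
  · have := hlower i (fun l => v l - a) fun l => sub_nonneg.2 (hv l).1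
    rw [hsum] at this
    linarith
  · have := hlower i (fun l => -(v l - (a + D))) fun l => neg_nonneg.2 (sub_nonpos.2 (hv l).2)
    simp only [mul_neg, sum_neg_distrib, hsum] at this
    linarith

theorem exists_windowProd_apply_mem_Icc {W : ℕ → Matrix ι ι R} (hW : ∀ k, W k ∈ rowStochastic R ι)
    {L : ℕ} {δ : R} (hblock : ∀ s i j, δ ≤ windowProd W s L i j) (s : ℕ) (j : ι) {m N : ℕ}
    (hmN : m * L ≤ N) : ∃ a, ∀ i, windowProd W s N i j ∈ Icc a (a + (1 - δ) ^ m) := by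
  induction m generalizing N with
  | zero =>
    have hN := windowProd_mem W s hW N
    exact ⟨0, fun i =>
      ⟨nonneg_of_mem_rowStochastic hN, by simpa using le_one_of_mem_rowStochastic hN⟩⟩
  | succ m ih =>
    rw [Nat.succ_mul] at hmN
    obtain ⟨N, rfl⟩ : ∃ N', N = N' + L := ⟨N - L, by omega⟩
    obtain ⟨a, ha⟩ := ih (N := N) (by omega)
    obtain ⟨a', ha'⟩ :=
      exists_mulVec_mem_Icc (windowProd_mem W _ hW L) (fun i => hblock _ i j) ha
    refine ⟨a', fun i => ?_⟩
    simpa [windowProd_add, pow_succ', mul_apply, mulVec, dotProduct] using ha' i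

end OrderedCommRing

end Matrix

theorem abs_sub_one_div_card_le {ι R : Type*} [Fintype ι] [Field R] [LinearOrder R]
    [IsStrictOrderedRing R] {v : ι → R} (hsum : ∑ i, v i = 1) {a D : R}
    (hv : ∀ i, v i ∈ Icc a (a + D)) (i : ι) : |v i - 1 / Fintype.card ι| ≤ D := by
  have hcard : (0 : R) < Fintype.card ι := by exact_mod_cast Fintype.card_pos_iff.2 ⟨i⟩
  have hlow : Fintype.card ι • a ≤ 1 :=
    hsum ▸ card_nsmul_le_sum univ v a fun l _ => (hv l).1
  have hupp : 1 ≤ Fintype.card ι • (a + D) :=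
    hsum ▸ sum_le_card_nsmul univ v (a + D) fun l _ => (hv l).2
  rw [nsmul_eq_mul] at hlow hupp
  have ha : a ≤ 1 / Fintype.card ι := by rw [le_div_iff₀ hcard]; linarith
  have haD : 1 / Fintype.card ι ≤ a + D := by rw [div_le_iff₀ hcard]; linarith
  rw [abs_sub_le_iff]
  constructor <;> linarith [(hv i).1, (hv i).2]

theorem pow_div_le_rpow_inv_pow_div {c : ℝ} (hc0 : 0 < c) (hc1 : c ≤ 1) (q L : ℕ) :
    c ^ ((q + 1) / L) ≤ (c ^ (L : ℝ)⁻¹) ^ q / c := by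
  have hexp : (q : ℝ) * (L : ℝ)⁻¹ ≤ ((q / L + 1 : ℕ) : ℝ) := by
    rw [← div_eq_mul_inv, Nat.cast_succ, ← Nat.floor_div_eq_div (K := ℝ)]
    exact (Nat.lt_floor_add_one _).le
  rw [le_div_iff₀ hc0, ← pow_succ, ← Real.rpow_mul_natCast hc0.le, mul_comm]
  calc c ^ ((q + 1) / L + 1) ≤ c ^ (q / L + 1) :=
        pow_le_pow_of_le_one hc0.le hc1 (by gcongr; omega)
    _ = c ^ (((q / L + 1 : ℕ)) : ℝ) := (Real.rpow_natCast c _).symm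
    _ ≤ c ^ ((q : ℝ) * (L : ℝ)⁻¹) := Real.rpow_le_rpow_of_exponent_ge hc0 hc1 hexp

theorem pow_div_le_mul_rpow_inv_pow {δ : ℝ} (hδ0 : 0 < δ) (hδ1 : δ < 1) (q L : ℕ) :
    (1 - δ) ^ ((q + 1) / L) ≤ 2 * (1 + δ⁻¹) / (1 - δ) * ((1 - δ) ^ (L : ℝ)⁻¹) ^ q := by
  have hpos : 0 < 1 - δ := by linarith
  calc (1 - δ) ^ ((q + 1) / L) ≤ ((1 - δ) ^ (L : ℝ)⁻¹) ^ q / (1 - δ) :=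
        pow_div_le_rpow_inv_pow_div hpos (by linarith) q L
    _ ≤ 2 * (1 + δ⁻¹) * ((1 - δ) ^ (L : ℝ)⁻¹) ^ q / (1 - δ) := by
        gcongr
        exact le_mul_of_one_le_left (by positivity) (by linarith [inv_pos.2 hδ0])
    _ = 2 * (1 + δ⁻¹) / (1 - δ) * ((1 - δ) ^ (L : ℝ)⁻¹) ^ q := by rw [div_mul_eq_mul_div]

theorem transitionMatrix_eq_windowProd {n : ℕ} (W : ℕ → Matrix (Fin n) (Fin n) ℝ) (k s : ℕ) :
    transitionMatrix W k s = windowProd W s (k - s + 1) :=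
  rfl

theorem transition_matrix_geometric_decay_general
    {n : ℕ}
    (η : ℝ) (hη : η ∈ Set.Ioo (0 : ℝ) 1) (κ : ℕ) (hκ : 1 ≤ κ)
    (W : ℕ → Matrix (Fin n) (Fin n) ℝ)
    (hWnonneg : ∀ k i j, 0 ≤ W k i j)
    (hWrow : ∀ k i, ∑ j, W k i j = 1)
    (hWcol : ∀ k j, ∑ i, W k i j = 1)
    (hWdiag : ∀ k i, η ≤ W k i i)
    (hWconn : ∀ k, ∀ i j : Fin n, ∃ s, k ≤ s ∧ s < k + κ ∧ η ≤ W s i j)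
    (K₀ : ℕ) (hK₀ : K₀ = (n - 1) * κ)
    (β μ : ℝ)
    (hβ : β = (1 - η ^ K₀) ^ ((K₀ : ℝ)⁻¹))
    (hμ : μ = 2 * (1 + (η ^ K₀)⁻¹) / (1 - η ^ K₀)) :
    ∀ k s : ℕ, s ≤ k → ∀ i j : Fin n,
      |transitionMatrix W k s i j - 1 / (n : ℝ)| ≤ μ * β ^ (k - s) := by
  intro k s _ i j
  have hrow : ∀ k, W k ∈ rowStochastic ℝ (Fin n) :=
    fun k => mem_rowStochastic_iff_sum.2 ⟨hWnonneg k, hWrow k⟩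
  have hcol : ∀ k, W k ∈ colStochastic ℝ (Fin n) :=
    fun k => mem_colStochastic_iff_sum.2 ⟨hWnonneg k, hWcol k⟩
  rw [transitionMatrix_eq_windowProd]
  rcases le_or_gt n 1 with hn | hn
  · -- `K₀ = 0`, so `μ = 2 * 2 / 0 = 0`, and `Ψ(k,s) = 1` as a stochastic `1 × 1` matrix.
    obtain rfl : n = 1 := le_antisymm hn i.pos
    obtain rfl : i = j := Subsingleton.elim i j
    have hone := sum_row_of_mem_rowStochastic (windowProd_mem W s hrow (k - s + 1)) i
    rw [Fin.sum_univ_one, Subsingleton.elim 0 i] at hone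
    simp [hone, hμ, hK₀]
  set δ := η ^ K₀
  have hK₀pos : 0 < K₀ := hK₀ ▸ Nat.mul_pos (by omega) hκ
  have hδ : 0 < δ ∧ δ < 1 := ⟨pow_pos hη.1 K₀, pow_lt_one₀ hη.1.le hη.2 hK₀pos.ne'⟩
  have hblock : ∀ s i j, δ ≤ windowProd W s K₀ i j :=
    pow_le_windowProd_apply_of_connected hη.1.le hWnonneg hWdiag
      (hK₀ ▸ Nat.le_mul_of_pos_left κ (by omega)) hWconn
  obtain ⟨a, ha⟩ := exists_windowProd_apply_mem_Icc hrow hblock s j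
    (Nat.div_mul_le_self (k - s + 1) K₀)
  calc |windowProd W s (k - s + 1) i j - 1 / (n : ℝ)| ≤ (1 - δ) ^ ((k - s + 1) / K₀) := by
        simpa using abs_sub_one_div_card_le
          (sum_col_of_mem_colStochastic (windowProd_mem W s hcol _) j) ha i
    _ ≤ μ * β ^ (k - s) := by
        rw [hμ, hβ]
        exact pow_div_le_mul_rpow_inv_pow hδ.1 hδ.2 _ _

/-- Lemma 7: under the network assumptions, the entries of the transition matrices
converge geometrically to `1/n`: `|[Ψ(k,s)]ᵢⱼ − 1/n| ≤ μ·β^{k−s}` for all `k ≥ s`. -/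
theorem transition_matrix_geometric_decay
    {n : ℕ} (hn : 0 < n)
    (η : ℝ) (hη : η ∈ Set.Ioo (0 : ℝ) 1) (κ : ℕ) (hκ : 1 ≤ κ)
    (W : ℕ → Matrix (Fin n) (Fin n) ℝ)
    (hWnonneg : ∀ k i j, 0 ≤ W k i j)
    (hWrow : ∀ k i, ∑ j, W k i j = 1)
    (hWcol : ∀ k j, ∑ i, W k i j = 1)
    (hWdiag : ∀ k i, η ≤ W k i i)
    (hWpos : ∀ k i j, W k i j ≠ 0 → η ≤ W k i j)
    (hWconn : ∀ k, ∀ i j : Fin n, ∃ s, k ≤ s ∧ s < k + κ ∧ η ≤ W s i j)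
    (K₀ : ℕ) (hK₀ : K₀ = (n - 1) * κ)
    (β μ : ℝ)
    (hβ : β = (1 - η ^ K₀) ^ ((K₀ : ℝ)⁻¹))
    (hμ : μ = 2 * (1 + (η ^ K₀)⁻¹) / (1 - η ^ K₀)) :
    ∀ k s : ℕ, s ≤ k → ∀ i j : Fin n,
      |transitionMatrix W k s i j - 1 / (n : ℝ)| ≤ μ * β ^ (k - s) :=
  transition_matrix_geometric_decay_general η hη κ hκ W hWnonneg hWrow hWcol hWdiag hWconn K₀ hK₀ β
    μ hβ hμ
end

section
/- Perturbed consensus with vanishing perturbations achieves consensus: suppose the matrices W(k) satisfy the network assumptions, D ≥ 0, ι : ℕ → [0,∞) satisfies ι(k) → 0, and x_i : ℕ → ℝ^p, p_i : ℕ → ℝ^p (i = 1,…,n) satisfy x_i(k+1) = Σ_{j=1}^n W(k)_{ij} x_j(k) + p_i(k+1) with ‖p_i(k+1)‖ ≤ ι(k)·D for all i and k ≥ 0. Then, with x̄(k) = (1/n) Σ_{j=1}^n x_j(k), lim_{k→∞} ‖x_i(k) − x̄(k)‖ = 0 for every i. -/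
/-!
The spread `V k = diam (range (x k))` of the configuration is the Lyapunov function. Over a
window of `κ` steps, a walk can wait on the diagonal until its edge appears, so the product of
the weight matrices has all entries at least `η ^ κ`. Any two of its rows then share mass at
least `n η ^ κ`, so it contracts the spread by `γ = 1 - n η ^ κ < 1` (Dobrushin), while the
perturbations add at most `e k = 2 ∑_{s<κ} ι (k + s) D`. From `V (k + κ) ≤ γ V k + e k` and
`e k → 0` we get `V k → 0`, and every agent is within `V k` of the average, which lies in the
convex hull of the configuration.
-/

open Filter Finset Matrix Metric Set Topology

section Diameter

variable {ι E : Type*} [Fintype ι] [NormedAddCommGroup E]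

lemma norm_sub_le_diam_range (v : ι → E) (l m : ι) : ‖v l - v m‖ ≤ diam (range v) :=
  dist_eq_norm (v l) (v m) ▸
    dist_le_diam_of_mem (finite_range v).isBounded (mem_range_self l) (mem_range_self m)

lemma diam_range_le_add_of_norm_sub_le [Nonempty ι] {u w : ι → E} {r : ℝ}
    (h : ∀ i, ‖u i - w i‖ ≤ r) : diam (range u) ≤ diam (range w) + 2 * r := by
  have hr : 0 ≤ r := (norm_nonneg _).trans (h (Classical.arbitrary ι))
  refine diam_le_of_forall_dist_le (by positivity) ?_
  rintro _ ⟨l, rfl⟩ _ ⟨m, rfl⟩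
  calc dist (u l) (u m) ≤ dist (u l) (w l) + dist (w l) (w m) + dist (w m) (u m) :=
        dist_triangle4 ..
    _ ≤ r + diam (range w) + r := by
        rw [dist_comm (w m), dist_eq_norm, dist_eq_norm, dist_eq_norm]
        gcongr
        exacts [h l, norm_sub_le_diam_range w l m, h m]
    _ = diam (range w) + 2 * r := by ring

variable [NormedSpace ℝ E]

lemma centerMass_mem_convexHull_range {w : ι → ℝ} (hw : ∀ l, 0 ≤ w l) (hpos : 0 < ∑ l, w l)
    (v : ι → E) : univ.centerMass w v ∈ convexHull ℝ (range v) :=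
  univ.centerMass_mem_convexHull (fun l _ => hw l) hpos fun l _ => mem_range_self l

lemma dist_le_diam_range_of_mem_convexHull {v : ι → E} {a b : E}
    (ha : a ∈ convexHull ℝ (range v)) (hb : b ∈ convexHull ℝ (range v)) :
    dist a b ≤ diam (range v) :=
  convexHull_diam (range v) ▸
    dist_le_diam_of_mem (isBounded_convexHull.2 (finite_range v).isBounded) ha hb

lemma norm_sub_average_le_diam_range (v : ι → E) (i : ι) :
    ‖v i - (Fintype.card ι : ℝ)⁻¹ • ∑ j, v j‖ ≤ diam (range v) := by
  have hcard : (0 : ℝ) < ∑ _j : ι, (1 : ℝ) := by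
    simpa using Fintype.card_pos_iff.2 ⟨i⟩
  have havg : univ.centerMass (fun _ => (1 : ℝ)) v = (Fintype.card ι : ℝ)⁻¹ • ∑ j, v j := by
    simp [Finset.centerMass]
  rw [← havg, ← dist_eq_norm]
  exact dist_le_diam_range_of_mem_convexHull (subset_convexHull ℝ _ (mem_range_self i))
    (centerMass_mem_convexHull_range (fun _ => zero_le_one) hcard v)

/-- Two nonnegative weightings of equal mass `t` place their barycentres `t⁻¹ • ∑ c l • v l`
in the convex hull of the points, whose diameter is that of the points. -/
lemma norm_sum_smul_sub_sum_smul_le {c d : ι → ℝ} (hc : ∀ l, 0 ≤ c l) (hd : ∀ l, 0 ≤ d l)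
    (hcd : ∑ l, c l = ∑ l, d l) (v : ι → E) :
    ‖∑ l, c l • v l - ∑ l, d l • v l‖ ≤ (∑ l, c l) * diam (range v) := by
  rcases (sum_nonneg fun l _ => hc l).eq_or_lt with ht | ht
  · have hc0 := (sum_eq_zero_iff_of_nonneg fun l _ => hc l).1 ht.symm
    have hd0 := (sum_eq_zero_iff_of_nonneg fun l _ => hd l).1 (hcd ▸ ht.symm)
    simp [hc0, hd0]
  · have hsum : ∀ w : ι → ℝ, 0 < ∑ l, w l → ∑ l, w l • v l = (∑ l, w l) • univ.centerMass w v :=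
      fun w hw => (smul_inv_smul₀ hw.ne' _).symm
    rw [hsum c ht, hsum d (hcd ▸ ht), ← hcd, ← smul_sub, norm_smul, Real.norm_of_nonneg ht.le,
      ← dist_eq_norm]
    exact mul_le_mul_of_nonneg_left (dist_le_diam_range_of_mem_convexHull
      (centerMass_mem_convexHull_range hc ht v) (centerMass_mem_convexHull_range hd (hcd ▸ ht) v))
      ht.le

end Diameter

section Mixing

variable {ι E : Type*} [Fintype ι] [NormedAddCommGroup E] [NormedSpace ℝ E]

/-- `A *ᵥ v` for a configuration `v` of points of a real vector space. -/
def mixVec (A : Matrix ι ι ℝ) (v : ι → E) : ι → E := fun i => ∑ j, A i j • v j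

lemma mixVec_mul (A B : Matrix ι ι ℝ) (v : ι → E) : mixVec (A * B) v = mixVec A (mixVec B v) := by
  funext i
  simp only [mixVec, mul_apply, sum_smul, smul_sum, smul_smul]
  exact sum_comm

lemma mixVec_sub (A : Matrix ι ι ℝ) (u v : ι → E) :
    mixVec A u - mixVec A v = mixVec A (u - v) := by
  funext i
  simp [mixVec, smul_sub, sum_sub_distrib]

variable [DecidableEq ι]

lemma mixVec_one (v : ι → E) : mixVec 1 v = v := by
  funext i
  simp [mixVec, one_apply, ite_smul]

lemma norm_mixVec_le {A : Matrix ι ι ℝ} (hA : A ∈ rowStochastic ℝ ι) {v : ι → E} {r : ℝ}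
    (h : ∀ j, ‖v j‖ ≤ r) (i : ι) : ‖mixVec A v i‖ ≤ r :=
  calc ‖mixVec A v i‖ ≤ ∑ j, A i j * r := by
        refine (norm_sum_le _ _).trans (sum_le_sum fun j _ => ?_)
        rw [norm_smul, Real.norm_of_nonneg (nonneg_of_mem_rowStochastic hA)]
        exact mul_le_mul_of_nonneg_left (h j) (nonneg_of_mem_rowStochastic hA)
    _ = r := by rw [← sum_mul, sum_row_of_mem_rowStochastic hA, one_mul]

lemma card_mul_le_one_of_le_apply {A : Matrix ι ι ℝ} (hA : A ∈ rowStochastic ℝ ι) {δ : ℝ}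
    (hδ : ∀ i j, δ ≤ A i j) : Fintype.card ι * δ ≤ 1 := by
  rcases isEmpty_or_nonempty ι with hι | ⟨⟨i⟩⟩
  · simp
  · calc Fintype.card ι * δ = ∑ _j : ι, δ := by simp
      _ ≤ ∑ j, A i j := sum_le_sum fun j _ => hδ i j
      _ = 1 := sum_row_of_mem_rowStochastic hA i

/-- Dobrushin's contraction: rows `a` and `b` share the mass `∑ l, min (A a l) (A b l)`,
which is at least `card ι * δ`, and only the remaining mass moves the two points apart. -/
lemma diam_range_mixVec_le {A : Matrix ι ι ℝ} (hA : A ∈ rowStochastic ℝ ι) {δ : ℝ}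
    (hδ : ∀ i j, δ ≤ A i j) (v : ι → E) :
    diam (range (mixVec A v)) ≤ (1 - Fintype.card ι * δ) * diam (range v) := by
  refine diam_le_of_forall_dist_le
    (mul_nonneg (sub_nonneg.2 (card_mul_le_one_of_le_apply hA hδ)) diam_nonneg) ?_
  rintro _ ⟨a, rfl⟩ _ ⟨b, rfl⟩
  set m : ι → ℝ := fun l => min (A a l) (A b l)
  have hsplit : mixVec A v a - mixVec A v b
      = ∑ l, (A a l - m l) • v l - ∑ l, (A b l - m l) • v l := by
    simp only [mixVec, sub_smul, sum_sub_distrib]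
    abel
  have hmass : ∀ i, ∑ l, (A i l - m l) = 1 - ∑ l, m l := fun i => by
    rw [sum_sub_distrib, sum_row_of_mem_rowStochastic hA]
  have hshared : Fintype.card ι * δ ≤ ∑ l, m l :=
    calc Fintype.card ι * δ = ∑ _l : ι, δ := by simp
      _ ≤ ∑ l, m l := sum_le_sum fun l _ => le_min (hδ a l) (hδ b l)
  rw [dist_eq_norm, hsplit]
  calc _ ≤ (∑ l, (A a l - m l)) * diam (range v) :=
        norm_sum_smul_sub_sum_smul_le (fun l => sub_nonneg.2 (min_le_left _ _))
          (fun l => sub_nonneg.2 (min_le_right _ _)) (by rw [hmass, hmass]) v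
    _ ≤ (1 - Fintype.card ι * δ) * diam (range v) := by
        rw [hmass]
        exact mul_le_mul_of_nonneg_right (by linarith) diam_nonneg

end Mixing

section TransitionProd

variable {ι : Type*} [Fintype ι]

lemma mul_le_mul_apply_of_nonneg {A B : Matrix ι ι ℝ} (hA : ∀ i j, 0 ≤ A i j)
    (hB : ∀ i j, 0 ≤ B i j) (i l j : ι) : A i l * B l j ≤ (A * B) i j :=
  single_le_sum (f := fun m => A i m * B m j) (fun _ _ => mul_nonneg (hA _ _) (hB _ _))
    (mem_univ l)

variable [DecidableEq ι] (W : ℕ → Matrix ι ι ℝ)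

def transitionProd (k : ℕ) : ℕ → Matrix ι ι ℝ
  | 0 => 1
  | m + 1 => W (k + m) * transitionProd k m

lemma transitionProd_add (k a b : ℕ) :
    transitionProd W k (a + b) = transitionProd W (k + a) b * transitionProd W k a := by
  induction b with
  | zero => simp [transitionProd]
  | succ b ih => rw [← add_assoc, transitionProd, ih, transitionProd, add_assoc, Matrix.mul_assoc]

lemma transitionProd_one (k : ℕ) : transitionProd W k 1 = W k := by
  simp [transitionProd]

variable {W}

lemma transitionProd_mem_rowStochastic (hW : ∀ k, W k ∈ rowStochastic ℝ ι) (k m : ℕ) :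
    transitionProd W k m ∈ rowStochastic ℝ ι := by
  induction m with
  | zero => exact one_mem _
  | succ m ih => exact mul_mem (hW _) ih

lemma pow_le_transitionProd_apply_self (hW : ∀ k, W k ∈ rowStochastic ℝ ι) {η : ℝ}
    (hη : 0 ≤ η) (hdiag : ∀ k i, η ≤ W k i i) (k m : ℕ) (i : ι) :
    η ^ m ≤ transitionProd W k m i i := by
  induction m with
  | zero => simp [transitionProd]
  | succ m ih =>
    calc η ^ (m + 1) ≤ W (k + m) i i * transitionProd W k m i i := by
          rw [pow_succ']
          exact mul_le_mul (hdiag _ _) ih (pow_nonneg hη _) (nonneg_of_mem_rowStochastic (hW _))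
      _ ≤ transitionProd W k (m + 1) i i :=
          mul_le_mul_apply_of_nonneg (A := W (k + m)) (B := transitionProd W k m)
            (fun _ _ => nonneg_of_mem_rowStochastic (hW _))
            (fun _ _ => nonneg_of_mem_rowStochastic (transitionProd_mem_rowStochastic hW k m)) i i i

/-- The walk waits on the diagonal (weight `≥ η` per step) until the step `s` where the edge
`i → j` is available, so the product over the window collects at least `η ^ κ`. -/
lemma pow_le_transitionProd_apply (hW : ∀ k, W k ∈ rowStochastic ℝ ι) {η : ℝ} (hη : 0 ≤ η)
    (hdiag : ∀ k i, η ≤ W k i i) {κ : ℕ}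
    (hconn : ∀ k, ∀ i j : ι, ∃ s, k ≤ s ∧ s < k + κ ∧ η ≤ W s i j) (k : ℕ) (i j : ι) :
    η ^ κ ≤ transitionProd W k κ i j := by
  obtain ⟨s, hks, hsκ, hWs⟩ := hconn k i j
  obtain ⟨a, rfl⟩ := Nat.exists_eq_add_of_le hks
  obtain ⟨b, rfl⟩ := Nat.exists_eq_add_of_lt (Nat.add_lt_add_iff_left.1 hsκ)
  have hnonneg : ∀ k' m, ∀ i' j' : ι, 0 ≤ transitionProd W k' m i' j' :=
    fun k' m _ _ => nonneg_of_mem_rowStochastic (transitionProd_mem_rowStochastic hW k' m)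
  have hsplit : transitionProd W k (a + b + 1)
      = transitionProd W (k + a + 1) b * (W (k + a) * transitionProd W k a) := by
    rw [add_right_comm, transitionProd_add W k (a + 1), transitionProd_add W k a 1,
      transitionProd_one, add_assoc]
  have hmid : ∀ i' j' : ι, 0 ≤ (W (k + a) * transitionProd W k a) i' j' := fun _ _ =>
    nonneg_of_mem_rowStochastic (mul_mem (hW _) (transitionProd_mem_rowStochastic hW k a))
  calc η ^ (a + b + 1) = η ^ b * (η * η ^ a) := by ring
    _ ≤ transitionProd W (k + a + 1) b i i * (W (k + a) i j * transitionProd W k a j j) := by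
        gcongr
        · exact nonneg_of_mem_rowStochastic (transitionProd_mem_rowStochastic hW _ _)
        · exact pow_le_transitionProd_apply_self hW hη hdiag _ _ _
        · exact nonneg_of_mem_rowStochastic (hW _)
        · exact pow_le_transitionProd_apply_self hW hη hdiag _ _ _
    _ ≤ transitionProd W (k + a + 1) b i i * (W (k + a) * transitionProd W k a) i j :=
        mul_le_mul_of_nonneg_left (mul_le_mul_apply_of_nonneg (A := W (k + a))
          (fun _ _ => nonneg_of_mem_rowStochastic (hW _)) (hnonneg k a) i j j) (hnonneg _ _ _ _)
    _ ≤ transitionProd W k (a + b + 1) i j := by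
        rw [hsplit]
        exact mul_le_mul_apply_of_nonneg (hnonneg _ _) hmid i i j

end TransitionProd

lemma norm_sub_mixVec_transitionProd_le {ι E : Type*} [Fintype ι] [DecidableEq ι]
    [NormedAddCommGroup E] [NormedSpace ℝ E] {W : ℕ → Matrix ι ι ℝ}
    (hW : ∀ k, W k ∈ rowStochastic ℝ ι) {x q : ℕ → ι → E} {b : ℕ → ℝ}
    (hrec : ∀ k i, x (k + 1) i = mixVec (W k) (x k) i + q (k + 1) i)
    (hq : ∀ k i, ‖q (k + 1) i‖ ≤ b k) (k m : ℕ) (i : ι) :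
    ‖x (k + m) i - mixVec (transitionProd W k m) (x k) i‖ ≤ ∑ s ∈ Finset.range m, b (k + s) := by
  induction m generalizing i with
  | zero => simp [transitionProd, mixVec_one]
  | succ m ih =>
    have hsplit : x (k + (m + 1)) i - mixVec (transitionProd W k (m + 1)) (x k) i
        = mixVec (W (k + m)) (x (k + m) - mixVec (transitionProd W k m) (x k)) i
          + q (k + m + 1) i := by
      rw [← add_assoc, hrec, transitionProd, mixVec_mul, ← mixVec_sub, Pi.sub_apply]
      abel
    rw [hsplit, Finset.sum_range_succ]
    exact (norm_add_le _ _).trans (add_le_add (norm_mixVec_le (hW _) ih i) (hq _ _))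

section Recursion

variable {u : ℕ → ℝ} {γ : ℝ} {κ : ℕ}

lemma le_pow_mul_add_of_le_mul_add {c : ℝ} {K : ℕ} (hγ : 0 ≤ γ) (hc : 0 ≤ c)
    (h : ∀ k ≥ K, u (k + κ) ≤ γ * u k + (1 - γ) * c) (m : ℕ) {k : ℕ} (hk : K ≤ k) :
    u (k + m * κ) ≤ γ ^ m * u k + c := by
  induction m with
  | zero => simpa using hc
  | succ m ih =>
    calc u (k + (m + 1) * κ) = u (k + m * κ + κ) := by ring_nf
      _ ≤ γ * u (k + m * κ) + (1 - γ) * c := h _ (hk.trans (Nat.le_add_right _ _))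
      _ ≤ γ * (γ ^ m * u k + c) + (1 - γ) * c := by gcongr
      _ = γ ^ (m + 1) * u k + c := by ring

/-- Once `e k` is below `(1 - γ) * ε / 2`, every residue class mod `κ` decays geometrically
into `[0, ε / 2]`. -/
lemma tendsto_zero_of_le_mul_add {e : ℕ → ℝ} (hκ : 0 < κ) (hγ0 : 0 ≤ γ) (hγ1 : γ < 1)
    (hu : ∀ k, 0 ≤ u k) (he : Tendsto e atTop (𝓝 0)) (h : ∀ k, u (k + κ) ≤ γ * u k + e k) :
    Tendsto u atTop (𝓝 0) := by
  refine tendsto_order.2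
    ⟨fun a ha => Eventually.of_forall fun k => ha.trans_le (hu k), fun ε hε => ?_⟩
  obtain ⟨K, hK⟩ := eventually_atTop.1
    (he.eventually (gt_mem_nhds (mul_pos (sub_pos.2 hγ1) (half_pos hε))))
  have hgeom := le_pow_mul_add_of_le_mul_add hγ0 (half_pos hε).le fun k hk =>
    (h k).trans (add_le_add le_rfl (hK k hk).le)
  obtain ⟨M, hM⟩ := Finite.bddAbove_range fun r : Fin κ => u (K + r)
  obtain ⟨m₀, hm₀⟩ := (((tendsto_pow_atTop_nhds_zero_of_lt_one hγ0 hγ1).mul_const M).eventually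
    (gt_mem_nhds (show 0 * M < ε / 2 by simpa using half_pos hε))).exists
  refine eventually_atTop.2 ⟨K + m₀ * κ, fun k hk => ?_⟩
  obtain ⟨r, m, hr, rfl⟩ : ∃ r m, r < κ ∧ k = K + r + m * κ :=
    ⟨(k - K) % κ, (k - K) / κ, Nat.mod_lt _ hκ, by have := Nat.mod_add_div' (k - K) κ; omega⟩
  have hm : m₀ ≤ m := Nat.lt_succ_iff.1 <| Nat.lt_of_mul_lt_mul_right (a := κ) (by
    rw [Nat.succ_mul]; omega)
  calc u (K + r + m * κ) ≤ γ ^ m * u (K + r) + ε / 2 := hgeom m (Nat.le_add_right _ _)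
    _ ≤ γ ^ m₀ * M + ε / 2 := add_le_add_left (mul_le_mul (pow_le_pow_of_le_one hγ0 hγ1.le hm)
          (hM ⟨⟨r, hr⟩, rfl⟩) (hu _) (pow_nonneg hγ0 _)) _
    _ < ε := by linarith

end Recursion

theorem perturbed_consensus_achieves_consensus_general
    {p n : ℕ} (hn : 0 < n)
    (η : ℝ) (hη : η ∈ Set.Ioo (0 : ℝ) 1) (κ : ℕ) (hκ : 1 ≤ κ)
    (W : ℕ → Matrix (Fin n) (Fin n) ℝ)
    (hWnonneg : ∀ k i j, 0 ≤ W k i j)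
    (hWrow : ∀ k i, ∑ j, W k i j = 1)
    (hWdiag : ∀ k i, η ≤ W k i i)
    (hWconn : ∀ k, ∀ i j : Fin n, ∃ s, k ≤ s ∧ s < k + κ ∧ η ≤ W s i j)
    (D : ℝ)
    (ι : ℕ → ℝ)
    (hι : Tendsto ι atTop (nhds 0))
    (x q : ℕ → Fin n → EuclideanSpace ℝ (Fin p))
    (hrec : ∀ k, ∀ i, x (k + 1) i = (∑ j, W k i j • x k j) + q (k + 1) i)
    (hq : ∀ k, ∀ i, ‖q (k + 1) i‖ ≤ ι k * D) :
    ∀ i : Fin n,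
      Tendsto (fun k => ‖x k i - (n : ℝ)⁻¹ • ∑ j, x k j‖) atTop (nhds 0) := by
  intro i
  have : Nonempty (Fin n) := Fin.pos_iff_nonempty.1 hn
  have hW : ∀ k, W k ∈ rowStochastic ℝ (Fin n) :=
    fun k => mem_rowStochastic_iff_sum.2 ⟨hWnonneg k, hWrow k⟩
  have hwindow : ∀ k i j, η ^ κ ≤ transitionProd W k κ i j :=
    pow_le_transitionProd_apply hW hη.1.le hWdiag hWconn
  have hγ0 : 0 ≤ 1 - n * η ^ κ := by
    simpa using card_mul_le_one_of_le_apply (transitionProd_mem_rowStochastic hW 0 κ) (hwindow 0)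
  have hγ1 : 1 - n * η ^ κ < 1 := by
    have : 0 < (n : ℝ) * η ^ κ := mul_pos (Nat.cast_pos.2 hn) (pow_pos hη.1 κ)
    linarith
  have hstep : ∀ k, diam (range (x (k + κ)))
      ≤ (1 - n * η ^ κ) * diam (range (x k)) + 2 * ∑ s ∈ Finset.range κ, ι (k + s) * D :=
    fun k => by
      have hmix := diam_range_mixVec_le (transitionProd_mem_rowStochastic hW k κ) (hwindow k) (x k)
      have hpert := diam_range_le_add_of_norm_sub_le
        (norm_sub_mixVec_transitionProd_le hW hrec hq k κ)
      rw [Fintype.card_fin] at hmix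
      linarith
  have he : Tendsto (fun k => 2 * ∑ s ∈ Finset.range κ, ι (k + s) * D) atTop (𝓝 0) := by
    simpa using ((tendsto_finsetSum _ fun s _ =>
      (hι.comp (tendsto_add_atTop_nat s)).mul_const D).const_mul 2)
  have hdiam : Tendsto (fun k => diam (range (x k))) atTop (𝓝 0) :=
    tendsto_zero_of_le_mul_add hκ hγ0 hγ1 (fun _ => diam_nonneg) he hstep
  refine squeeze_zero (fun _ => norm_nonneg _) (fun k => ?_) hdiam
  simpa using norm_sub_average_le_diam_range (x k) i

/-- Lemma 9 (deterministic form): perturbed consensus with vanishing perturbations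
achieves consensus. If `xᵢ(k+1) = Σⱼ W(k)ᵢⱼ xⱼ(k) + pᵢ(k+1)` with `‖pᵢ(k+1)‖ ≤ ι(k)·D`
and `ι(k) → 0`, then `‖xᵢ(k) − x̄(k)‖ → 0` for every `i`. -/
theorem perturbed_consensus_achieves_consensus
    {p n : ℕ} (hn : 0 < n)
    (η : ℝ) (hη : η ∈ Set.Ioo (0 : ℝ) 1) (κ : ℕ) (hκ : 1 ≤ κ)
    (W : ℕ → Matrix (Fin n) (Fin n) ℝ)
    (hWnonneg : ∀ k i j, 0 ≤ W k i j)
    (hWrow : ∀ k i, ∑ j, W k i j = 1)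
    (hWcol : ∀ k j, ∑ i, W k i j = 1)
    (hWdiag : ∀ k i, η ≤ W k i i)
    (hWpos : ∀ k i j, W k i j ≠ 0 → η ≤ W k i j)
    (hWconn : ∀ k, ∀ i j : Fin n, ∃ s, k ≤ s ∧ s < k + κ ∧ η ≤ W s i j)
    (D : ℝ) (hD : 0 ≤ D)
    (ι : ℕ → ℝ) (hιnonneg : ∀ k, 0 ≤ ι k)
    (hι : Tendsto ι atTop (nhds 0))
    (x q : ℕ → Fin n → EuclideanSpace ℝ (Fin p))
    (hrec : ∀ k, ∀ i, x (k + 1) i = (∑ j, W k i j • x k j) + q (k + 1) i)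
    (hq : ∀ k, ∀ i, ‖q (k + 1) i‖ ≤ ι k * D) :
    ∀ i : Fin n,
      Tendsto (fun k => ‖x k i - (n : ℝ)⁻¹ • ∑ j, x k j‖) atTop (nhds 0) :=
  perturbed_consensus_achieves_consensus_general hn η hη κ hκ W hWnonneg hWrow hWdiag hWconn D ι hι
    x q hrec hq
end
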